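/- arXiv:2511.01601 — 4 statements merged into one kernel-verified Lean document; each statement's English description precedes it below -/
import Mathlib

section
/- The map S: ℤ³ → ℤ³ given by S(r, d, n) = (n - r, -d + 2(n-r)(g-1), n - d + (n-r)(g-1)) satisfies the numerical Serre duality identity χ(v, w) = χ(w, S(v)) for all v, w ∈ ℤ³, where χ is the Euler form χ((r_1,d_1,n_1),(r_2,d_2,n_2)) = r_1(d_2 + r_2(1-g)) - d_1 r_2 + n_1(n_2 - d_2 - r_2(1-g)). -/
/-- The Euler form on the numerical Grothendieck group `ℤ³` of the derived category of
coherent systems on a genus `g` curve. -/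
def eulerForm (g : ℤ) (v w : ℤ × ℤ × ℤ) : ℤ :=
  v.1 * (w.2.1 + w.1 * (1 - g)) - v.2.1 * w.1 + v.2.2 * (w.2.2 - w.2.1 - w.1 * (1 - g))

/-- The numerical action of the Serre functor on `ℤ³`. -/
def serreMap (g : ℤ) (v : ℤ × ℤ × ℤ) : ℤ × ℤ × ℤ :=
  (v.2.2 - v.1, -v.2.1 + 2 * (v.2.2 - v.1) * (g - 1), v.2.2 - v.2.1 + (v.2.2 - v.1) * (g - 1))

/-- numerical Serre duality `χ(v, w) = χ(w, S(v))` for all `v, w ∈ ℤ³`. -/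
theorem numerical_serre_duality (g : ℤ) (hg : 1 ≤ g) (v w : ℤ × ℤ × ℤ) :
    eulerForm g v w = eulerForm g w (serreMap g v) := by
  simp only [eulerForm, serreMap]; ring
end

section
/- Let Q be a quadratic form on ℝⁿ and Z: ℝⁿ → ℂ a linear map such that Q is negative definite on ker Z. If v = v₁ + v₂ with Z(v₁), Z(v₂) nonzero and positively proportional, and Q(v₁) ≥ 0, Q(v₂) ≥ 0, then Q(v) ≥ 0. -/
/-- Bayer–Macrì–Stellari convexity lemma: let `Q` be a quadratic form
on `ℝⁿ` and `Z : ℝⁿ → ℂ` a linear map with `Q` negative definite on `ker Z`. If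
`v = v₁ + v₂` with `Z(v₁), Z(v₂)` nonzero and positively proportional, and
`Q(v₁) ≥ 0`, `Q(v₂) ≥ 0`, then `Q(v) ≥ 0`. -/
theorem quadratic_form_nonneg_of_sum
    (n : ℕ) (Q : QuadraticForm ℝ (Fin n → ℝ)) (Z : (Fin n → ℝ) →ₗ[ℝ] ℂ)
    (hneg : ∀ v : Fin n → ℝ, Z v = 0 → v ≠ 0 → Q v < 0)
    (v v₁ v₂ : Fin n → ℝ) (hv : v = v₁ + v₂)
    (hZ₁ : Z v₁ ≠ 0) (hZ₂ : Z v₂ ≠ 0)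
    (hprop : ∃ t : ℝ, 0 < t ∧ Z v₂ = t • Z v₁)
    (hQ₁ : 0 ≤ Q v₁) (hQ₂ : 0 ≤ Q v₂) :
    0 ≤ Q v := by
  obtain ⟨t, ht, hZt⟩ := hprop
  set w : Fin n → ℝ := t • v₁ - v₂ with hw
  have hQv : Q v = Q v₁ + Q v₂ + QuadraticMap.polar Q v₁ v₂ := by
    rw [hv]
    simp [QuadraticMap.polar]
  by_cases hw0 : w = 0
  · have hv₂ : v₂ = t • v₁ := (sub_eq_zero.mp hw0).symm
    have : Q v₂ = t * t * Q v₁ := by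
      rw [hv₂, QuadraticMap.map_smul]; simp
    have hp : QuadraticMap.polar Q v₁ v₂ = t * QuadraticMap.polar Q v₁ v₁ := by
      rw [hv₂, QuadraticMap.polar_smul_right]; simp
    have hpv : QuadraticMap.polar Q v₁ v₁ = 2 * Q v₁ := by
      simp only [QuadraticMap.polar]
      rw [show v₁ + v₁ = (2:ℝ) • v₁ by module, QuadraticMap.map_smul]
      simp; ring
    rw [hQv, hp, hpv]
    nlinarith
  · have hZw : Z w = 0 := by
      simp [hw, map_sub, map_smul, hZt]
    have hQw : Q w < 0 := hneg w hZw hw0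
    have hQw' : Q w = t * t * Q v₁ + Q v₂ - t * QuadraticMap.polar Q v₁ v₂ := by
      have hrw : w = t • v₁ + (-v₂) := by rw [hw]; abel
      rw [hrw, QuadraticMap.map_add (⇑Q) (t • v₁) (-v₂), QuadraticMap.map_smul,
        QuadraticMap.map_neg, QuadraticMap.polar_smul_left, QuadraticMap.polar_neg_right]
      simp; ring
    nlinarith
end

section
/- Fix α > 0, b < 0, and a class v = (r, d, n) ∈ ℤ³ with r, d, n > 0. Define μ_α(r', d', n') = d'/r' + α n'/r' for r' ≠ 0, and for (b,w) on the line ℓ: w = -(1/α)(b - d/r) + n/r define ν_{b,w}(r',d',n') = (n' - w r')/(d' - b r'). Then for any (r', d', n') with r' > 0 and d' - b r' > 0: the inequality ν_{b,w}(r',d',n') < ν_{b,w}(r,d,n) for all sufficiently negative b (with w determined by ℓ) implies μ_α(r',d',n') < μ_α(r,d,n). -/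
/-!
On the line `ℓ`, the numerator of `ν_{b,w}(v)` is `-(1/α)` times its denominator, so `ν_{b,w}(v) = -1/α`
for every `b`. For `v'` the identity `α (n' - w r') + (d' - b r') = r' (μ_α(v') - μ_α(v))` holds with
no dependence on `b`, so `ν_{b,w}(v') < -1/α` is equivalent to `μ_α(v') < μ_α(v)` at every admissible
point of the line; one sufficiently negative `b` is therefore enough.
-/

open Filter

noncomputable section

def alphaSlope (α r d n : ℝ) : ℝ := d / r + α * n / r

def tiltSlope (b w r d n : ℝ) : ℝ := (n - w * r) / (d - b * r)

/-- The `w`-coordinate of the point with abscissa `b` on the line of slope `-1/α` through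
`(d/r, n/r)`. -/
def rayHeight (α r d n b : ℝ) : ℝ := -(1 / α) * (b - d / r) + n / r

lemma tiltSlope_rayHeight_self (α b : ℝ) {r d n : ℝ} (hr : r ≠ 0) (hb : d - b * r ≠ 0) :
    tiltSlope b (rayHeight α r d n b) r d n = -(1 / α) := by
  unfold tiltSlope rayHeight
  rw [div_eq_iff hb]
  field_simp
  ring

lemma mul_sub_rayHeight_add_sub (b : ℝ) {α r d n r' d' n' : ℝ} (hα : α ≠ 0) (hr : r ≠ 0)
    (hr' : r' ≠ 0) :
    α * (n' - rayHeight α r d n b * r') + (d' - b * r') =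
      r' * (alphaSlope α r' d' n' - alphaSlope α r d n) := by
  unfold rayHeight alphaSlope
  field_simp
  ring

lemma tiltSlope_rayHeight_lt_iff {α r d n b r' d' n' : ℝ} (hα : 0 < α) (hr : r ≠ 0)
    (hr' : 0 < r') (hb : 0 < d' - b * r') :
    tiltSlope b (rayHeight α r d n b) r' d' n' < -(1 / α) ↔
      alphaSlope α r' d' n' < alphaSlope α r d n := by
  set w := rayHeight α r d n b
  calc tiltSlope b w r' d' n' < -(1 / α) ↔ n' - w * r' < -(1 / α) * (d' - b * r') :=
        div_lt_iff₀ hb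
    _ ↔ α * (n' - w * r') < α * (-(1 / α) * (d' - b * r')) := (mul_lt_mul_iff_right₀ hα).symm
    _ ↔ α * (n' - w * r') + (d' - b * r') < 0 := by
        rw [← mul_assoc, mul_neg, mul_one_div_cancel hα.ne', neg_one_mul, ← lt_neg_iff_add_neg]
    _ ↔ r' * (alphaSlope α r' d' n' - alphaSlope α r d n) < 0 := by
        rw [mul_sub_rayHeight_add_sub b hα.ne' hr hr'.ne']
    _ ↔ alphaSlope α r' d' n' < alphaSlope α r d n := by
        rw [← mul_zero r', mul_lt_mul_iff_right₀ hr', sub_neg]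

lemma eventually_atBot_sub_mul_pos (d : ℝ) {r : ℝ} (hr : 0 < r) :
    ∀ᶠ b in atBot, 0 < d - b * r := by
  filter_upwards [eventually_lt_atBot (d / r)] with b hb
  rw [sub_pos, ← lt_div_iff₀ hr]
  exact hb

end

theorem large_volume_limit_recovers_alpha_stability_general
    (α : ℝ) (hα : 0 < α)
    (r d n : ℤ) (hr : 0 < r)
    (r' d' n' : ℤ) (hr' : 0 < r')
    (hν : ∃ B : ℝ, ∀ b : ℝ, b ≤ B →
      ((d' : ℝ) - b * r' > 0) →
      ((n' : ℝ) - (-(1 / α) * (b - (d : ℝ) / r) + (n : ℝ) / r) * r') / ((d' : ℝ) - b * r')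
        < ((n : ℝ) - (-(1 / α) * (b - (d : ℝ) / r) + (n : ℝ) / r) * r) / ((d : ℝ) - b * r)) :
    (d' : ℝ) / r' + α * (n' : ℝ) / r' < (d : ℝ) / r + α * (n : ℝ) / r := by
  have hrR : (0 : ℝ) < r := Int.cast_pos.2 hr
  have hr'R : (0 : ℝ) < r' := Int.cast_pos.2 hr'
  obtain ⟨b, hν_b, hd'b, hdb⟩ := (eventually_atBot.2 hν |>.and <|
    (eventually_atBot_sub_mul_pos d' hr'R).and (eventually_atBot_sub_mul_pos d hrR)).exists
  have hlt : tiltSlope b (rayHeight α r d n b) r' d' n' <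
      tiltSlope b (rayHeight α r d n b) r d n := hν_b hd'b
  rw [tiltSlope_rayHeight_self α b hrR.ne' hdb.ne'] at hlt
  exact (tiltSlope_rayHeight_lt_iff hα hrR.ne' hr'R hd'b).1 hlt

/-- along the ray `ℓ_v^α` of slope `-1/α` through `Π(v) = (d/r, n/r)` in
the `(b,w)`-plane, the tilt-slope ordering `ν_{b,w}` for `b` sufficiently negative
recovers the classical `μ_α`-slope ordering. Here `μ_α(r,d,n) = d/r + α n/r` and
`ν_{b,w}(r,d,n) = (n - wr)/(d - br)` with `w = -(1/α)(b - d/r) + n/r`. -/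
theorem large_volume_limit_recovers_alpha_stability
    (α : ℝ) (hα : 0 < α)
    (r d n : ℤ) (hr : 0 < r) (hd : 0 < d) (hn : 0 < n)
    (r' d' n' : ℤ) (hr' : 0 < r')
    (hν : ∃ B : ℝ, ∀ b : ℝ, b ≤ B →
      ((d' : ℝ) - b * r' > 0) →
      ((n' : ℝ) - (-(1 / α) * (b - (d : ℝ) / r) + (n : ℝ) / r) * r') / ((d' : ℝ) - b * r')
        < ((n : ℝ) - (-(1 / α) * (b - (d : ℝ) / r) + (n : ℝ) / r) * r) / ((d : ℝ) - b * r)) :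
    (d' : ℝ) / r' + α * (n' : ℝ) / r' < (d : ℝ) / r + α * (n : ℝ) / r :=
  large_volume_limit_recovers_alpha_stability_general α hα r d n hr r' d' n' hr' hν
end

section
/- Let Z_{b,w}(r,d,n) = -n + wr + i(d - br) and fix a class v = (r,d,n) with r > 0 and a second class v' = (r',d',n') with r' > 0. The locus of (b,w) ∈ ℝ² where ν_{b,w}(v') = ν_{b,w}(v) (with ν_{b,w}(u) = (n_u - w r_u)/(d_u - b r_u)) and both imaginary parts d - br, d' - br' are nonzero, is contained in a line in the (b,w)-plane passing through the point Π(v) = (d/r, n/r), provided v and v' are not proportional. -/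
/-- numerical walls for a class of nonzero rank. For classes
`v = (r,d,n)` and `v' = (r',d',n')` with `r, r' > 0` and `v'` not proportional to `v`,
the locus of `(b,w)` where the tilt-slopes `ν_{b,w}(v') = ν_{b,w}(v)` agree (and both
imaginary parts `d - br`, `d' - br'` are nonzero) is contained in a line in the
`(b,w)`-plane passing through `Π(v) = (d/r, n/r)`. -/
theorem wall_is_line_through_projection
    (r d n r' d' n' : ℝ) (hr : 0 < r) (hr' : 0 < r')
    (hnp : ¬ ∃ t : ℝ, (r', d', n') = (t * r, t * d, t * n)) :
    ∃ a c e : ℝ, (a, c) ≠ (0, 0) ∧ a * (d / r) + c * (n / r) = e ∧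
      ∀ b w : ℝ, d - b * r ≠ 0 → d' - b * r' ≠ 0 →
        (n' - w * r') / (d' - b * r') = (n - w * r) / (d - b * r) →
        a * b + c * w = e := by
  refine ⟨n' * r - n * r', r' * d - r * d', n' * d - n * d', ?_, ?_, ?_⟩
  · intro h
    have h1 : n' * r - n * r' = 0 := congrArg Prod.fst h
    have h2 : r' * d - r * d' = 0 := congrArg Prod.snd h
    apply hnp
    refine ⟨r' / r, ?_⟩
    have hrne := hr.ne'
    simp only [Prod.mk.injEq]
    refine ⟨by field_simp, by field_simp; linarith, by field_simp; linarith⟩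
  · field_simp
    ring
  · intro b w h1 h2 heq
    rw [div_eq_div_iff h2 h1] at heq
    linear_combination -heq
end
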